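/- In U_q(sl_2), with V_1 the (l+1)-dimensional irreducible module with highest weight vector v_1 and V_2 the q-boson module B_q⁻ with highest weight vector v_2 (e' v_2 = 0), the vectors E_t = ∑_{i=0}^{t} a_{t,i}(q) f^{(i)}v_1 ⊗ f^{(t−i)}v_2 for 0 ≤ t ≤ l, where a_{t,i}(q) = ∏_{0 ≤ j ≤ i−1} q^{l−t+1}/(q^{2(l−j)} − 1) and a_{t,0} = 1, satisfy Δ_B(e')(E_t) = 0. -/

import Mathlib

/-!
`Δ_B(e')` maps an antidiagonal vector `∑ᵢ aᵢ f^{(i)}v₁ ⊗ f^{(t−i)}v₂` to the antidiagonal of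
degree `t − 1`, the coefficient of `f^{(j)}v₁ ⊗ f^{(t−1−j)}v₂` receiving `a_{j+1}` from
`(q⁻¹ − q) k e ⊗ 1` and `a_j` from `k ⊗ e'`. As `(q⁻¹ − q)[n] = −q^{−n}(q^{2n} − 1)`, the ratio
`a_{t,j+1} / a_{t,j} = q^{l−t+1} / (q^{2(l−j)} − 1)` is exactly the one making each coefficient
vanish; the denominator is nonzero since `j < t ≤ l` and `q` is not a root of unity.
-/

noncomputable section

/-- The field `ℚ(q)` of rational functions. -/
abbrev K : Type := RatFunc ℚ

/-- The indeterminate `q`. -/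
def q : K := RatFunc.X

/-- The balanced quantum integer `[k] = (q^k - q^{-k})/(q - q⁻¹)`. -/
def qint (k : ℤ) : K := (q ^ k - q ^ (-k)) / (q - q⁻¹)

/-- The coefficient `a_{t,i}(q) = ∏_{0 ≤ j ≤ i−1} q^{l−t+1}/(q^{2(l−j)} − 1)`,
with `a_{t,0} = 1`. -/
def att (l t i : ℕ) : K :=
  ∏ j ∈ Finset.range i, q ^ ((l : ℤ) - t + 1) / (q ^ (2 * ((l : ℤ) - j)) - 1)

/-- The vector `E_t = ∑_{i=0}^{t} a_{t,i}(q) f^{(i)}v₁ ⊗ f^{(t−i)}v₂` in `V₁ ⊗ V₂`,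
where the basis vector `f^{(i)}v₁ ⊗ f^{(j)}v₂` is encoded as the finitely supported
function `single (i, j)`. -/
def Etvec (l t : ℕ) : (ℕ × ℕ) →₀ K :=
  ∑ i ∈ Finset.range (t + 1), Finsupp.single (i, t - i) (att l t i)

/-- The action of `Δ_B(e') = (q⁻¹ − q) k e ⊗ 1 + k ⊗ e'` on `V₁ ⊗ V₂`, where on the
`(l+1)`-dimensional module `V₁`: `e f^{(i)}v₁ = [l−i+1] f^{(i−1)}v₁`, `k f^{(i)}v₁ =
q^{l−2i} f^{(i)}v₁` (with `e v₁ = 0`), and on the `q`-boson module `V₂`: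
`e'(f^{(j)}v₂) = q^{1−j} f^{(j−1)}v₂` (with `e' v₂ = 0`). -/
def deltaEp (l : ℕ) (v : (ℕ × ℕ) →₀ K) : (ℕ × ℕ) →₀ K :=
  v.sum fun p c =>
    (if p.1 = 0 then 0
      else Finsupp.single (p.1 - 1, p.2)
        (c * ((q⁻¹ - q) * qint ((l : ℤ) - p.1 + 1) * q ^ ((l : ℤ) - 2 * ((p.1 : ℤ) - 1)))))
    +
    (if p.2 = 0 then 0
      else Finsupp.single (p.1, p.2 - 1)
        (c * (q ^ ((l : ℤ) - 2 * (p.1 : ℤ)) * q ^ (1 - (p.2 : ℤ)))))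

theorem RatFunc.intDegree_X_zpow {F : Type*} [Field F] (k : ℤ) :
    RatFunc.intDegree ((RatFunc.X : RatFunc F) ^ k) = k := by
  have hX : (RatFunc.X : RatFunc F) ≠ 0 := RatFunc.X_ne_zero
  induction k using Int.induction_on with
  | zero => simp
  | succ n ih =>
    rw [zpow_add_one₀ hX, RatFunc.intDegree_mul (zpow_ne_zero _ hX) hX, ih, RatFunc.intDegree_X]
  | pred n ih =>
    rw [zpow_sub_one₀ hX, RatFunc.intDegree_mul (zpow_ne_zero _ hX) (inv_ne_zero hX), ih,
      RatFunc.intDegree_inv, RatFunc.intDegree_X]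
    ring

lemma q_ne_zero : q ≠ 0 := RatFunc.X_ne_zero

lemma q_zpow_ne_one {k : ℤ} (hk : k ≠ 0) : q ^ k ≠ 1 := fun h => hk <| by
  rw [← RatFunc.intDegree_X_zpow (F := ℚ) k, ← q, h, RatFunc.intDegree_one]

lemma q_sub_inv_ne_zero : q - q⁻¹ ≠ 0 := by
  have h : q - q⁻¹ = q⁻¹ * (q ^ (2 : ℤ) - 1) := by field_simp [q_ne_zero]
  rw [h]
  exact mul_ne_zero (inv_ne_zero q_ne_zero) (sub_ne_zero.2 (q_zpow_ne_one two_ne_zero))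

lemma inv_sub_mul_qint (n : ℤ) : (q⁻¹ - q) * qint n = -(q ^ n - q ^ (-n)) := by
  rw [qint, ← neg_sub q, neg_mul, mul_div_cancel₀ _ q_sub_inv_ne_zero]

lemma zpow_div_mul_inv_sub_mul_qint (m : ℤ) {n : ℤ} (hn : n ≠ 0) :
    q ^ m / (q ^ (2 * n) - 1) * ((q⁻¹ - q) * qint n) = -q ^ (m - n) := by
  have hne : q ^ (2 * n) - 1 ≠ 0 := sub_ne_zero.2 (q_zpow_ne_one (mul_ne_zero two_ne_zero hn))
  have hfactor : q ^ n - q ^ (-n) = q ^ (-n) * (q ^ (2 * n) - 1) := by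
    rw [mul_sub, ← zpow_add₀ q_ne_zero, mul_one]; ring_nf
  rw [inv_sub_mul_qint, hfactor, zpow_sub₀ q_ne_zero, zpow_neg]
  field_simp

/-- The coefficient of `(q⁻¹ − q) k e ⊗ 1` on `f^{(i)}v₁ ⊗ f^{(j)}v₂`, independent of `j`. -/
def leftCoeff (l i : ℕ) : K :=
  (q⁻¹ - q) * qint ((l : ℤ) - i + 1) * q ^ ((l : ℤ) - 2 * ((i : ℤ) - 1))

/-- The coefficient of `k ⊗ e'` on `f^{(i)}v₁ ⊗ f^{(j)}v₂`. -/
def rightCoeff (l i j : ℕ) : K :=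
  q ^ ((l : ℤ) - 2 * (i : ℤ)) * q ^ (1 - (j : ℤ))

lemma deltaEp_single (l : ℕ) (p : ℕ × ℕ) (c : K) :
    deltaEp l (Finsupp.single p c) =
      (if p.1 = 0 then 0 else Finsupp.single (p.1 - 1, p.2) (c * leftCoeff l p.1)) +
      (if p.2 = 0 then 0 else Finsupp.single (p.1, p.2 - 1) (c * rightCoeff l p.1 p.2)) :=
  Finsupp.sum_single_index (by simp)

lemma deltaEp_finset_sum {ι : Type*} (l : ℕ) (s : Finset ι) (v : ι → (ℕ × ℕ) →₀ K) :
    deltaEp l (∑ i ∈ s, v i) = ∑ i ∈ s, deltaEp l (v i) := by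
  refine (Finsupp.sum_finsetSum_index (fun p => by simp) fun p c₁ c₂ => ?_).symm
  split_ifs <;> simp only [add_mul, Finsupp.single_add, add_zero, zero_add]
  abel

lemma Finset.sum_range_succ_add_shift {M : Type*} [AddCommMonoid M] (F G : ℕ → M) (t : ℕ)
    (hF : F 0 = 0) (hG : G t = 0) :
    ∑ i ∈ range (t + 1), (F i + G i) = ∑ j ∈ range t, (F (j + 1) + G j) := by
  rw [sum_add_distrib, sum_add_distrib, sum_range_succ', sum_range_succ, hF, hG,
    add_zero, add_zero]

lemma deltaEp_sum_single_antidiagonal (l t : ℕ) (a : ℕ → K) :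
    deltaEp l (∑ i ∈ Finset.range (t + 1), Finsupp.single (i, t - i) (a i)) =
      ∑ j ∈ Finset.range t, Finsupp.single (j, t - j - 1)
        (a (j + 1) * leftCoeff l (j + 1) + a j * rightCoeff l j (t - j)) := by
  simp only [deltaEp_finset_sum, deltaEp_single]
  rw [Finset.sum_range_succ_add_shift _ _ t (by simp) (by simp)]
  refine Finset.sum_congr rfl fun j hj => ?_
  have hjt : t - j ≠ 0 := Nat.sub_ne_zero_of_lt (Finset.mem_range.1 hj)
  rw [if_neg j.succ_ne_zero, if_neg hjt, Nat.add_sub_cancel, Nat.sub_succ', ← Finsupp.single_add]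

lemma att_succ (l t j : ℕ) :
    att l t (j + 1) = att l t j * (q ^ ((l : ℤ) - t + 1) / (q ^ (2 * ((l : ℤ) - j)) - 1)) :=
  Finset.prod_range_succ _ _

lemma att_succ_mul_leftCoeff_add_att_mul_rightCoeff {l t j : ℕ} (hjt : j < t) (ht : t ≤ l) :
    att l t (j + 1) * leftCoeff l (j + 1) + att l t j * rightCoeff l j (t - j) = 0 := by
  have hleft : leftCoeff l (j + 1) = (q⁻¹ - q) * qint ((l : ℤ) - j) * q ^ ((l : ℤ) - 2 * j) := by
    rw [leftCoeff]; push_cast; ring_nf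
  have hright :
      rightCoeff l j (t - j) = q ^ ((l : ℤ) - 2 * j) * q ^ ((l - t + 1 : ℤ) - (l - j)) := by
    rw [rightCoeff, Nat.cast_sub hjt.le]; ring_nf
  have hlj : (l : ℤ) - j ≠ 0 := sub_ne_zero.2 (by omega)
  rw [att_succ, hleft, hright]
  linear_combination att l t j * q ^ ((l : ℤ) - 2 * j) *
    zpow_div_mul_inv_sub_mul_qint ((l : ℤ) - t + 1) hlj

/-- The vectors `E_t` (for `0 ≤ t ≤ l`) are highest weight vectors for the `q`-boson
module structure on `V₁ ⊗ V₂`: `Δ_B(e')(E_t) = 0`. -/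
theorem deltaEp_Etvec (l t : ℕ) (ht : t ≤ l) : deltaEp l (Etvec l t) = 0 := by
  rw [Etvec, deltaEp_sum_single_antidiagonal]
  refine Finset.sum_eq_zero fun j hj => ?_
  rw [att_succ_mul_leftCoeff_add_att_mul_rightCoeff (Finset.mem_range.1 hj) ht,
    Finsupp.single_zero]

end
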